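/- arXiv:1902.01927 — 6 statements merged into one kernel-verified Lean document; each statement's English description precedes it below -/
import Mathlib

section
/- Any piecewise smooth closed curve C in the equatorial Schwarzschild optical geometry that winds once around the origin and lies in the region r ≥ 3m has length at least 2π·3√3·m, the length of the photon sphere circle {r = 3m}. -/
/-- Any piecewise smooth closed curve in the equatorial Schwarzschild optical geometry,
winding once around the origin and lying in the region `r ≥ 3m`, has length at least
`2π · 3√3 · m`, the length of the photon sphere circle. -/
theorem schwarzschild_length_bound (m : ℝ) (hm : 0 < m)
    (r φ r' φ' : ℝ → ℝ)
    (hr : ∀ fraktur ∈ Set.Icc (0:ℝ) 1, HasDerivAt r (r' fraktur) fraktur)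
    (hφ : ∀ fraktur ∈ Set.Icc (0:ℝ) 1, HasDerivAt φ (φ' fraktur) fraktur)
    (hr' : ContinuousOn r' (Set.Icc (0:ℝ) 1))
    (hφ' : ContinuousOn φ' (Set.Icc (0:ℝ) 1))
    (hbound : ∀ fraktur ∈ Set.Icc (0:ℝ) 1, 3 * m ≤ r fraktur)
    (hclosed : r 0 = r 1)
    (hwind : φ 1 - φ 0 = 2 * Real.pi) :
    2 * Real.pi * (3 * Real.sqrt 3 * m) ≤
      ∫ fraktur in (0:ℝ)..1,
        Real.sqrt ((r' fraktur) ^ 2 / (1 - 2 * m / r fraktur) ^ 2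
          + (r fraktur) ^ 2 * (φ' fraktur) ^ 2 / (1 - 2 * m / r fraktur)) := by
  have h01 : (0:ℝ) ≤ 1 := zero_le_one
  have huIcc : Set.uIcc (0:ℝ) 1 = Set.Icc 0 1 := Set.uIcc_of_le h01
  have hrc : ContinuousOn r (Set.Icc 0 1) := fun t ht =>
    (hr t ht).continuousAt.continuousWithinAt
  have hrpos : ∀ t ∈ Set.Icc (0:ℝ) 1, 0 < r t := by
    intro t ht; have := hbound t ht; nlinarith
  have hrne : ∀ t ∈ Set.Icc (0:ℝ) 1, r t ≠ 0 := fun t ht => (hrpos t ht).ne'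
  have hd : ∀ t ∈ Set.Icc (0:ℝ) 1, 0 < 1 - 2 * m / r t := by
    intro t ht
    have h3 := hbound t ht
    rw [sub_pos, div_lt_one (hrpos t ht)]; nlinarith
  have hs3 : (0:ℝ) < Real.sqrt 3 := Real.sqrt_pos.mpr (by norm_num)
  have hs3sq : Real.sqrt 3 ^ 2 = 3 := Real.sq_sqrt (by norm_num)
  set F : ℝ → ℝ := fun t =>
    Real.sqrt ((r' t) ^ 2 / (1 - 2 * m / r t) ^ 2
      + (r t) ^ 2 * (φ' t) ^ 2 / (1 - 2 * m / r t)) with hFdef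
  set G : ℝ → ℝ := fun t => 3 * Real.sqrt 3 * m * |φ' t| with hGdef
  have hdc : ContinuousOn (fun t => 1 - 2 * m / r t) (Set.Icc 0 1) :=
    continuousOn_const.sub (continuousOn_const.div hrc hrne)
  have hFc : ContinuousOn F (Set.Icc 0 1) := by
    apply Real.continuous_sqrt.comp_continuousOn
    apply ContinuousOn.add
    · exact (hr'.pow 2).div (hdc.pow 2) (fun t ht => pow_ne_zero _ (hd t ht).ne')
    · exact ((hrc.pow 2).mul (hφ'.pow 2)).div hdc (fun t ht => (hd t ht).ne')
  have hGc : ContinuousOn G (Set.Icc 0 1) := continuousOn_const.mul hφ'.abs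
  -- pointwise bound G ≤ F on Icc
  have hGF : ∀ t ∈ Set.Icc (0:ℝ) 1, G t ≤ F t := by
    intro t ht
    have hdt := hd t ht
    have h3 := hbound t ht
    have hrt := hrpos t ht
    have key : 27 * m ^ 2 * (φ' t) ^ 2 ≤ (r t) ^ 2 * (φ' t) ^ 2 / (1 - 2 * m / r t) := by
      rw [le_div_iff₀ hdt]
      have hfac : 0 ≤ (r t - 3 * m) ^ 2 * (r t + 6 * m) := by positivity
      have hinv : 2 * m / r t * r t = 2 * m := div_mul_cancel₀ _ (hrne t ht)
      have h27 : 27 * m ^ 2 * (1 - 2 * m / r t) ≤ (r t) ^ 2 := by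
        nlinarith [hfac, hinv, hrt]
      nlinarith [mul_le_mul_of_nonneg_right h27 (sq_nonneg (φ' t))]
    have hsq : G t = Real.sqrt (27 * m ^ 2 * (φ' t) ^ 2) := by
      rw [show (27:ℝ) * m ^ 2 * (φ' t) ^ 2 = (3 * Real.sqrt 3 * m * |φ' t|) ^ 2 by
        rw [mul_pow, mul_pow, mul_pow, sq_abs, hs3sq]; ring]
      rw [Real.sqrt_sq (by positivity)]
    calc G t = Real.sqrt (27 * m ^ 2 * (φ' t) ^ 2) := hsq
      _ ≤ Real.sqrt ((r' t) ^ 2 / (1 - 2 * m / r t) ^ 2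
            + (r t) ^ 2 * (φ' t) ^ 2 / (1 - 2 * m / r t)) := by
          apply Real.sqrt_le_sqrt
          have : (0:ℝ) ≤ (r' t) ^ 2 / (1 - 2 * m / r t) ^ 2 := by positivity
          linarith
  -- integrability
  have hFint : IntervalIntegrable F MeasureTheory.volume 0 1 :=
    (hFc.mono (by rw [huIcc])).intervalIntegrable
  have hGint : IntervalIntegrable G MeasureTheory.volume 0 1 :=
    (hGc.mono (by rw [huIcc])).intervalIntegrable
  have hφint : IntervalIntegrable φ' MeasureTheory.volume 0 1 :=
    (hφ'.mono (by rw [huIcc])).intervalIntegrable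
  -- FTC
  have hFTC : ∫ t in (0:ℝ)..1, φ' t = φ 1 - φ 0 := by
    apply intervalIntegral.integral_eq_sub_of_hasDerivAt
    · intro t ht; exact hφ t (by rwa [huIcc] at ht)
    · exact hφint
  have habs : 2 * Real.pi ≤ ∫ t in (0:ℝ)..1, |φ' t| := by
    calc 2 * Real.pi = |∫ t in (0:ℝ)..1, φ' t| := by
          rw [hFTC, hwind, abs_of_nonneg (by positivity)]
      _ ≤ ∫ t in (0:ℝ)..1, |φ' t| :=
          intervalIntegral.abs_integral_le_integral_abs h01
  have hGval : 2 * Real.pi * (3 * Real.sqrt 3 * m) ≤ ∫ t in (0:ℝ)..1, G t := by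
    have : ∫ t in (0:ℝ)..1, G t = 3 * Real.sqrt 3 * m * ∫ t in (0:ℝ)..1, |φ' t| := by
      simp [hGdef, intervalIntegral.integral_const_mul]
    rw [this]
    have hc : (0:ℝ) ≤ 3 * Real.sqrt 3 * m := by positivity
    nlinarith [mul_le_mul_of_nonneg_left habs hc]
  calc 2 * Real.pi * (3 * Real.sqrt 3 * m) ≤ ∫ t in (0:ℝ)..1, G t := hGval
    _ ≤ ∫ t in (0:ℝ)..1, F t :=
        intervalIntegral.integral_mono_on h01 hGint hFint hGF
end

section
/- Let m > 0, c > 3m, and define ν₊ : [c,∞) → ℝ by ν₊(r)² = c²/((1-3m/c)·sqrt(1-2m/c)) + ∫_c^r 2s/(1-2m/s)^{3/2} ds. Then for all r ≥ c, ν₊(r)² ≥ r²/((1-3m/r)·sqrt(1-2m/r)). -/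
/-!
Write `F(r) = r²/((1-3m/r)√(1-2m/r))` and `G(s) = 2s/(1-2m/s)^{3/2}`. For `r > 3m` a direct
computation gives `F'(r) = G(r) - m(2-3m/r)/((1-3m/r)²(1-2m/r)^{3/2})`, and the subtracted term is
nonnegative there. Hence `F(r) - F(c) ≤ ∫_c^r G`.
-/

open Real Set MeasureTheory

theorem hasDerivAt_one_sub_div {k x : ℝ} (hx : x ≠ 0) :
    HasDerivAt (fun y => 1 - k / y) (k / x ^ 2) x := by
  refine (((hasDerivAt_const x k).div (hasDerivAt_id x) hx).const_sub 1).congr_deriv ?_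
  simp [neg_div]

theorem hasDerivAt_sq_div_mul_sqrt {m x : ℝ} (hm : 0 < m) (hx : 3 * m < x) :
    HasDerivAt (fun y => y ^ 2 / ((1 - 3 * m / y) * √(1 - 2 * m / y)))
      (2 * x / (1 - 2 * m / x) ^ ((3:ℝ) / 2)
        - m * (2 - 3 * m / x) / ((1 - 3 * m / x) ^ 2 * √(1 - 2 * m / x) ^ 3)) x := by
  have hx0 : 0 < x := by linarith
  have ha : 0 < 1 - 3 * m / x := by rw [sub_pos, div_lt_one hx0]; exact hx
  have hb2 : 0 < 1 - 2 * m / x := by rw [sub_pos, div_lt_one hx0]; linarith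
  have hb : 0 < √(1 - 2 * m / x) := sqrt_pos.2 hb2
  have hsq : √(1 - 2 * m / x) ^ 2 = 1 - 2 * m / x := sq_sqrt hb2.le
  have hsqrt := (hasDerivAt_one_sub_div (k := 2 * m) hx0.ne').sqrt hb2.ne'
  have hden := (hasDerivAt_one_sub_div (k := 3 * m) hx0.ne').fun_mul hsqrt
  refine ((hasDerivAt_pow 2 x).fun_div hden (mul_pos ha hb).ne').congr_deriv ?_
  rw [rpow_div_two_eq_sqrt _ hb2.le, show (3:ℝ) = ((3:ℕ):ℝ) by norm_num, rpow_natCast]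
  generalize √(1 - 2 * m / x) = b at *
  generalize ha_def : 1 - 3 * m / x = a at *
  have hax : a * x = x - 3 * m := by rw [← ha_def]; field_simp
  have hbx : b ^ 2 * x = x - 2 * m := by rw [hsq]; field_simp
  field_simp
  push_cast
  linear_combination (2 * x * a - 3 * m) * hbx + (m - 2 * a * x) * hax

theorem continuousOn_two_mul_div_one_sub_div_rpow {m : ℝ} (hm : 0 ≤ m) (p : ℝ) :
    ContinuousOn (fun s => 2 * s / (1 - 2 * m / s) ^ p) (Ioi (2 * m)) := by
  have hpos : ∀ s ∈ Ioi (2 * m), 0 < 1 - 2 * m / s := fun s hs => by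
    have hs0 : 0 < s := by linarith [mem_Ioi.1 hs]
    rw [sub_pos, div_lt_one hs0]
    exact hs
  refine ContinuousOn.div (by fun_prop)
    (ContinuousOn.rpow_const ?_ fun s hs => Or.inl (hpos s hs).ne')
    fun s hs => (rpow_pos_of_pos (hpos s hs) p).ne'
  exact continuousOn_const.sub <| continuousOn_const.div continuousOn_id fun s hs => by
    linarith [mem_Ioi.1 hs]

/-- With `ν₊(r)² = c²/((1-3m/c)√(1-2m/c)) + ∫_c^r 2s/(1-2m/s)^{3/2} ds`,
one has `ν₊(r)² ≥ r²/((1-3m/r)√(1-2m/r))` for all `r ≥ c > 3m`. -/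
theorem nu_plus_sq_lower_bound (m c : ℝ) (hm : 0 < m) (hc : 3 * m < c)
    (r : ℝ) (hr : c ≤ r) :
    r ^ 2 / ((1 - 3 * m / r) * Real.sqrt (1 - 2 * m / r)) ≤
      c ^ 2 / ((1 - 3 * m / c) * Real.sqrt (1 - 2 * m / c)) +
        ∫ s in c..r, 2 * s / (1 - 2 * m / s) ^ ((3:ℝ)/2) := by
  have h3m : ∀ x ∈ Icc c r, 3 * m < x := fun x hx => hc.trans_le hx.1
  have hderiv x (hx : x ∈ Icc c r) := hasDerivAt_sq_div_mul_sqrt hm (h3m x hx)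
  have hint : IntegrableOn (fun s => 2 * s / (1 - 2 * m / s) ^ ((3:ℝ)/2)) (Icc c r) :=
    ((continuousOn_two_mul_div_one_sub_div_rpow hm.le _).mono
      fun x hx => mem_Ioi.2 (by linarith [h3m x hx])).integrableOn_Icc
  have hcorr_nonneg : ∀ x ∈ Ioo c r,
      0 ≤ m * (2 - 3 * m / x) / ((1 - 3 * m / x) ^ 2 * √(1 - 2 * m / x) ^ 3) := by
    intro x hx
    have hx0 : 0 < x := by linarith [h3m x (Ioo_subset_Icc_self hx)]
    have h2 : 0 ≤ 2 - 3 * m / x := by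
      rw [sub_nonneg, div_le_iff₀ hx0]; linarith [h3m x (Ioo_subset_Icc_self hx)]
    exact div_nonneg (mul_nonneg hm.le h2) (by positivity)
  have key := intervalIntegral.sub_le_integral_of_hasDeriv_right_of_le hr
    (fun x hx => (hderiv x hx).continuousAt.continuousWithinAt)
    (fun x hx => (hderiv x (Ioo_subset_Icc_self hx)).hasDerivWithinAt) hint
    (fun x hx => sub_le_self _ (hcorr_nonneg x hx))
  linarith
end

section
/- The Gaussian curvature of the equatorial plane in the Schwarzschild optical metric equals K(r) = -(2m/r³)(1 - 3m/(2r)), and in particular K(r) < 0 for all r > 2m. -/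
/-!
With `s = √(r(r-2m))` one has `EG = (r²/(r-2m)²)² s²` and `G' = 2r²(r-3m)/(r-2m)²`, so the
inner quotient `G'/√(EG)` collapses to `2(r-3m)/s`. Its derivative is `2m(2r-3m)/s³`, and
dividing by `2√(EG)` leaves `-m(2r-3m)/r⁴` since `s⁴ = r²(r-2m)²`.
-/

open Real Filter Topology

section OpticalMetric

variable {m x : ℝ}

lemma hasDerivAt_sq_mul_inv_one_sub_div (hx : x ≠ 0) (hxm : x - 2 * m ≠ 0) :
    HasDerivAt (fun y : ℝ => y ^ 2 * (1 - 2 * m / y)⁻¹)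
      (2 * x ^ 2 * (x - 3 * m) / (x - 2 * m) ^ 2) x := by
  have hf : 1 - 2 * m / x ≠ 0 := by
    rw [one_sub_div hx]; exact div_ne_zero hxm hx
  have hf' : HasDerivAt (fun y : ℝ => 1 - 2 * m / y) (2 * m / x ^ 2) x := by
    simpa [div_eq_mul_inv] using ((hasDerivAt_inv hx).const_mul (2 * m)).const_sub 1
  refine ((hasDerivAt_pow 2 x).mul (hf'.inv hf)).congr_deriv ?_
  simp only [Pi.inv_apply, one_sub_div hx]
  field_simp
  ring

lemma sqrt_optical_area_element (h : 0 < x * (x - 2 * m)) :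
    √((1 - 2 * m / x)⁻¹ ^ 2 * (x ^ 2 * (1 - 2 * m / x)⁻¹))
      = x ^ 2 / (x - 2 * m) ^ 2 * √(x * (x - 2 * m)) := by
  have hx : x ≠ 0 := by rintro rfl; simp at h
  have hxm : x - 2 * m ≠ 0 := by intro h0; simp [h0] at h
  have harg : (1 - 2 * m / x)⁻¹ ^ 2 * (x ^ 2 * (1 - 2 * m / x)⁻¹)
      = (x ^ 2 / (x - 2 * m) ^ 2) ^ 2 * (x * (x - 2 * m)) := by
    field_simp
  rw [harg, sqrt_mul (by positivity), sqrt_sq (by positivity)]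

lemma deriv_div_sqrt_optical_area_element (h : 0 < x * (x - 2 * m)) :
    deriv (fun y : ℝ => y ^ 2 * (1 - 2 * m / y)⁻¹) x /
        √((1 - 2 * m / x)⁻¹ ^ 2 * (x ^ 2 * (1 - 2 * m / x)⁻¹))
      = 2 * (x - 3 * m) / √(x * (x - 2 * m)) := by
  have hx : x ≠ 0 := by rintro rfl; simp at h
  have hxm : x - 2 * m ≠ 0 := by intro h0; simp [h0] at h
  rw [(hasDerivAt_sq_mul_inv_one_sub_div hx hxm).deriv, sqrt_optical_area_element h]
  field_simp

lemma hasDerivAt_two_mul_sub_div_sqrt (h : 0 < x * (x - 2 * m)) :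
    HasDerivAt (fun y : ℝ => 2 * (y - 3 * m) / √(y * (y - 2 * m)))
      (2 * m * (2 * x - 3 * m) / √(x * (x - 2 * m)) ^ 3) x := by
  have hs : √(x * (x - 2 * m)) ≠ 0 := (sqrt_pos.mpr h).ne'
  have hq : HasDerivAt (fun y : ℝ => y * (y - 2 * m)) (2 * x - 2 * m) x :=
    ((hasDerivAt_id x).mul ((hasDerivAt_id x).sub_const (2 * m))).congr_deriv (by simp only [id_eq]; ring)
  refine ((((hasDerivAt_id x).sub_const (3 * m)).const_mul 2).div (hq.sqrt h.ne') hs).congr_deriv ?_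
  simp only [id_eq]
  field_simp
  rw [sq_sqrt h.le]
  ring

end OpticalMetric

lemma schwarzschild_curvature_neg {m r : ℝ} (hm : 0 < m) (hr : 2 * m < r) :
    -(2 * m / r ^ 3) * (1 - 3 * m / (2 * r)) < 0 := by
  have hr0 : 0 < r := by linarith
  rw [neg_mul, neg_lt_zero]
  exact mul_pos (by positivity) (by rw [sub_pos, div_lt_one (by positivity)]; linarith)

/-- The Gaussian curvature of the equatorial Schwarzschild optical metric
`E dr² + G dφ²` with `E = (1-2m/r)⁻²`, `G = r²(1-2m/r)⁻¹`, computed via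
`K = -(1/(2√(EG))) d/dr (G'/√(EG))`, equals `-(2m/r³)(1 - 3m/(2r))`, which is
negative for `r > 2m`. -/
theorem schwarzschild_gaussian_curvature (m : ℝ) (hm : 0 < m) (r : ℝ) (hr : 2 * m < r) :
    (-(1 / (2 * Real.sqrt (((1 - 2 * m / r)⁻¹ ^ 2) * (r ^ 2 * (1 - 2 * m / r)⁻¹)))) *
        deriv (fun x : ℝ =>
          deriv (fun y : ℝ => y ^ 2 * (1 - 2 * m / y)⁻¹) x /
            Real.sqrt ((1 - 2 * m / x)⁻¹ ^ 2 * (x ^ 2 * (1 - 2 * m / x)⁻¹))) r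
      = -(2 * m / r ^ 3) * (1 - 3 * m / (2 * r))) ∧
    -(2 * m / r ^ 3) * (1 - 3 * m / (2 * r)) < 0 := by
  have hr0 : 0 < r := by linarith
  have hrm : 0 < r * (r - 2 * m) := mul_pos hr0 (by linarith)
  have hratio : (fun x : ℝ => deriv (fun y : ℝ => y ^ 2 * (1 - 2 * m / y)⁻¹) x /
        √((1 - 2 * m / x)⁻¹ ^ 2 * (x ^ 2 * (1 - 2 * m / x)⁻¹)))
      =ᶠ[𝓝 r] fun x => 2 * (x - 3 * m) / √(x * (x - 2 * m)) :=
    ((by fun_prop : Continuous fun x : ℝ => x * (x - 2 * m)).tendsto r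
      |>.eventually_const_lt hrm).mono
      fun x hx => deriv_div_sqrt_optical_area_element hx
  refine ⟨?_, schwarzschild_curvature_neg hm hr⟩
  rw [hratio.deriv_eq, (hasDerivAt_two_mul_sub_div_sqrt hrm).deriv, sqrt_optical_area_element hrm]
  have hs : 0 < √(r * (r - 2 * m)) := sqrt_pos.mpr hrm
  have hs4 : √(r * (r - 2 * m)) ^ 4 = (r * (r - 2 * m)) ^ 2 := by
    rw [show (4 : ℕ) = 2 * 2 from rfl, pow_mul, sq_sqrt hrm.le]
  field_simp
  rw [hs4]
  ring
end

section
/- For m, q with m² > (8/9)q², the Reissner–Nordström function F(r) = (1 - 3m/r + 2q²/r²)/sqrt(1 - 2m/r + q²/r²) satisfies 0 ≤ F(r) < 1 for all r ≥ r⁺ where r⁺ = (3/2)(m + sqrt(m² - (8/9)q²)), with F(r⁺) = 0. -/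
/-- Reissner–Nordström: with `F(r) = (1-3m/r+2q²/r²)/√(1-2m/r+q²/r²)` and
`r⁺ = (3/2)(m + √(m² - (8/9)q²))` the outer photon sphere radius, one has
`0 ≤ F(r) < 1` for all `r ≥ r⁺`, and `F(r⁺) = 0`. -/
theorem reissner_nordstrom_first_condition (m q : ℝ) (hm : 0 < m)
    (hq : (8:ℝ)/9 * q ^ 2 < m ^ 2) :
    (∀ r : ℝ, (3:ℝ)/2 * (m + Real.sqrt (m ^ 2 - (8:ℝ)/9 * q ^ 2)) ≤ r →
      0 ≤ (1 - 3 * m / r + 2 * q ^ 2 / r ^ 2) / Real.sqrt (1 - 2 * m / r + q ^ 2 / r ^ 2) ∧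
      (1 - 3 * m / r + 2 * q ^ 2 / r ^ 2) / Real.sqrt (1 - 2 * m / r + q ^ 2 / r ^ 2) < 1) ∧
    ((1 - 3 * m / ((3:ℝ)/2 * (m + Real.sqrt (m ^ 2 - (8:ℝ)/9 * q ^ 2)))
        + 2 * q ^ 2 / ((3:ℝ)/2 * (m + Real.sqrt (m ^ 2 - (8:ℝ)/9 * q ^ 2))) ^ 2) /
      Real.sqrt (1 - 2 * m / ((3:ℝ)/2 * (m + Real.sqrt (m ^ 2 - (8:ℝ)/9 * q ^ 2)))
        + q ^ 2 / ((3:ℝ)/2 * (m + Real.sqrt (m ^ 2 - (8:ℝ)/9 * q ^ 2))) ^ 2) = 0) := by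
  set s := Real.sqrt (m ^ 2 - (8:ℝ)/9 * q ^ 2) with hs
  have hs2 : s ^ 2 = m ^ 2 - (8:ℝ)/9 * q ^ 2 := Real.sq_sqrt (by linarith)
  have hs0 : 0 ≤ s := Real.sqrt_nonneg _
  set r0 : ℝ := (3:ℝ)/2 * (m + s) with hr0def
  have hr0m : (3:ℝ)/2 * m ≤ r0 := by nlinarith
  have hr0pos : 0 < r0 := by linarith
  have hroot : r0 ^ 2 - 3 * m * r0 + 2 * q ^ 2 = 0 := by
    have : r0 ^ 2 = (9:ℝ)/4 * (m + s) ^ 2 := by rw [hr0def]; ring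
    nlinarith [hs2]
  have hq9 : q ^ 2 < (9:ℝ)/8 * m ^ 2 := by nlinarith
  have main : ∀ r : ℝ, r0 ≤ r →
      0 ≤ (1 - 3 * m / r + 2 * q ^ 2 / r ^ 2) / Real.sqrt (1 - 2 * m / r + q ^ 2 / r ^ 2) ∧
      (1 - 3 * m / r + 2 * q ^ 2 / r ^ 2) / Real.sqrt (1 - 2 * m / r + q ^ 2 / r ^ 2) < 1 := by
    intro r hr
    have hrpos : 0 < r := lt_of_lt_of_le hr0pos hr
    have hrne : r ≠ 0 := ne_of_gt hrpos
    have hmr : q ^ 2 < m * r := by nlinarith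
    have hNum : 0 ≤ r ^ 2 - 3 * m * r + 2 * q ^ 2 := by
      have h1 : 0 ≤ (r - r0) * (r + r0 - 3 * m) := by
        apply mul_nonneg (by linarith)
        have : 3 * s ≤ r + r0 - 3 * m := by nlinarith
        linarith
      nlinarith
    have hD : 0 < r ^ 2 - 2 * m * r + q ^ 2 := by nlinarith
    set N : ℝ := 1 - 3 * m / r + 2 * q ^ 2 / r ^ 2 with hN
    set D : ℝ := 1 - 2 * m / r + q ^ 2 / r ^ 2 with hDdef
    have hNeq : N = (r ^ 2 - 3 * m * r + 2 * q ^ 2) / r ^ 2 := by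
      rw [hN]; field_simp
    have hDeq : D = (r ^ 2 - 2 * m * r + q ^ 2) / r ^ 2 := by
      rw [hDdef]; field_simp
    have hr2 : (0:ℝ) < r ^ 2 := by positivity
    have hNpos : 0 ≤ N := by rw [hNeq]; positivity
    have hDpos : 0 < D := by rw [hDeq]; positivity
    have hDlt1 : D < 1 := by
      rw [hDeq, div_lt_one hr2]; linarith [mul_pos hm hrpos]
    have hND : N < D := by
      rw [hNeq, hDeq, div_lt_div_iff₀ hr2 hr2]
      have h2 : r ^ 2 - 3 * m * r + 2 * q ^ 2 < r ^ 2 - 2 * m * r + q ^ 2 := by linarith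
      exact mul_lt_mul_of_pos_right h2 hr2
    have hsD : 0 < Real.sqrt D := Real.sqrt_pos.2 hDpos
    refine ⟨div_nonneg hNpos hsD.le, ?_⟩
    rw [div_lt_one hsD]
    have hN1 : N ^ 2 ≤ N := by
      rw [sq]; exact mul_le_of_le_one_right hNpos (le_of_lt (lt_trans hND hDlt1))
    exact (Real.lt_sqrt hNpos).2 (lt_of_le_of_lt hN1 hND)
  refine ⟨main, ?_⟩
  have hnum0 : 1 - 3 * m / r0 + 2 * q ^ 2 / r0 ^ 2 = 0 := by
    have hr0ne : r0 ≠ 0 := ne_of_gt hr0pos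
    have heq : 1 - 3 * m / r0 + 2 * q ^ 2 / r0 ^ 2
        = (r0 ^ 2 - 3 * m * r0 + 2 * q ^ 2) / r0 ^ 2 := by
      field_simp
    rw [heq, hroot, zero_div]
  rw [hnum0, zero_div]
end

section
/- Let m > 0 and q satisfy m² > (8/9)q², and let r⁺ = (3/2)(m + sqrt(m² − (8/9)q²)). Then the cubic polynomial P(r) = r³ − (3/(2m))(m² + q²)r² + 3q²r − q⁴/m satisfies P(r) ≥ 0 for all r ≥ r⁺. -/
set_option maxHeartbeats 1600000 in
/-- The cubic `P(r) = r³ - (3/(2m))(m²+q²)r² + 3q²r - q⁴/m` is nonnegative for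
all `r ≥ r⁺ = (3/2)(m + √(m² - (8/9)q²))`, when `m > 0` and `m² > (8/9)q²`. -/
theorem rn_cubic_nonneg (m q : ℝ) (hm : 0 < m) (hq : (8:ℝ)/9 * q ^ 2 < m ^ 2)
    (r : ℝ) (hr : (3:ℝ)/2 * (m + Real.sqrt (m ^ 2 - (8:ℝ)/9 * q ^ 2)) ≤ r) :
    0 ≤ r ^ 3 - 3 / (2 * m) * (m ^ 2 + q ^ 2) * r ^ 2 + 3 * q ^ 2 * r - q ^ 4 / m := by
  set s := Real.sqrt (m ^ 2 - (8:ℝ)/9 * q ^ 2) with hs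
  have hs0 : 0 ≤ s := Real.sqrt_nonneg _
  have hs2 : s ^ 2 = m ^ 2 - (8:ℝ)/9 * q ^ 2 := Real.sq_sqrt (by linarith)
  set t := r - (3:ℝ)/2 * (m + s) with htdef
  have ht : 0 ≤ t := by simp [htdef]; linarith
  have hr' : r = (3:ℝ)/2 * (m + s) + t := by ring
  clear_value s t
  have key : 0 ≤ m * (r ^ 3 - 3 / (2 * m) * (m ^ 2 + q ^ 2) * r ^ 2
      + 3 * q ^ 2 * r - q ^ 4 / m) := by
    have hexp : m * (r ^ 3 - 3 / (2 * m) * (m ^ 2 + q ^ 2) * r ^ 2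
        + 3 * q ^ 2 * r - q ^ 4 / m)
        = m * t ^ 3 + (3 * m ^ 2 + (9:ℝ)/2 * m * s - (3:ℝ)/2 * q ^ 2) * t ^ 2
          + 3 * ((m / 2 + 3 * s / 2) * ((3:ℝ)/2 * m ^ 2 + (3:ℝ)/2 * m * s - q ^ 2)) * t
          + ((27:ℝ)/32 * m ^ 3 * s + (135:ℝ)/32 * m ^ 2 * s ^ 2
            + (189:ℝ)/32 * m * s ^ 3 + (81:ℝ)/32 * s ^ 4) := by
      have h1 : q ^ 4 = ((9:ℝ)/8 * (m ^ 2 - s ^ 2)) ^ 2 := by rw [hs2]; ring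
      have h2 : q ^ 2 = (9:ℝ)/8 * (m ^ 2 - s ^ 2) := by rw [hs2]; ring
      rw [hr', h1, h2]
      field_simp
      ring
    rw [hexp]
    have hq2 : q ^ 2 < (9:ℝ)/8 * m ^ 2 := by nlinarith
    have c2 : 0 ≤ 3 * m ^ 2 + (9:ℝ)/2 * m * s - (3:ℝ)/2 * q ^ 2 := by
      nlinarith [mul_nonneg hm.le hs0]
    have c1 : 0 ≤ (m / 2 + 3 * s / 2) * ((3:ℝ)/2 * m ^ 2 + (3:ℝ)/2 * m * s - q ^ 2) := by
      apply mul_nonneg (by linarith)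
      nlinarith [mul_nonneg hm.le hs0]
    have c0 : 0 ≤ (27:ℝ)/32 * m ^ 3 * s + (135:ℝ)/32 * m ^ 2 * s ^ 2
        + (189:ℝ)/32 * m * s ^ 3 + (81:ℝ)/32 * s ^ 4 := by
      have := hm.le
      positivity
    have := pow_nonneg ht 3
    have := pow_nonneg ht 2
    nlinarith [mul_nonneg hm.le (pow_nonneg ht 3), mul_nonneg c2 (pow_nonneg ht 2),
      mul_nonneg c1 ht]
  exact nonneg_of_mul_nonneg_right key hm
end

section
/- For m, q with m² > (8/9)q², the second derivative d²f/dr*² = (2m/r⁵)·P(r;m,q)/sqrt(1 − 2m/r + q²/r²), with P(r;m,q) = r³ − (3/(2m))(m²+q²)r² + 3q²r − q⁴/m, is nonnegative for all r ≥ r⁺_ph = (3/2)(m + sqrt(m² − (8/9)q²)). -/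
/-- Lemma 3 of the paper: the second tortoise derivative
`d²f/dr*² = (2m/r⁵)·P(r;m,q)/√(1-2m/r+q²/r²)` of the Reissner–Nordström optical
profile is nonnegative for all `r ≥ r⁺ = (3/2)(m + √(m² - (8/9)q²))`. -/
theorem rn_second_condition (m q : ℝ) (hm : 0 < m) (hq : (8:ℝ)/9 * q ^ 2 < m ^ 2)
    (r : ℝ) (hr : (3:ℝ)/2 * (m + Real.sqrt (m ^ 2 - (8:ℝ)/9 * q ^ 2)) ≤ r) :
    0 ≤ (2 * m / r ^ 5) *
        (r ^ 3 - 3 / (2 * m) * (m ^ 2 + q ^ 2) * r ^ 2 + 3 * q ^ 2 * r - q ^ 4 / m) /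
        Real.sqrt (1 - 2 * m / r + q ^ 2 / r ^ 2) := by
  set s := Real.sqrt (m ^ 2 - (8:ℝ)/9 * q ^ 2) with hs
  have hs0 : 0 ≤ s := Real.sqrt_nonneg _
  have hs2 : s ^ 2 = m ^ 2 - (8:ℝ)/9 * q ^ 2 := by
    rw [hs, Real.sq_sqrt (by linarith)]
  have hrpos : 0 < r := by nlinarith
  have key : 0 ≤ 2*m*r^3 - 3*(m^2+q^2)*r^2 + 6*m*q^2*r - 2*q^4 := by
    nlinarith [sq_nonneg (r - 3/2*(m+s)), sq_nonneg s, sq_nonneg q,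
      mul_nonneg (sub_nonneg.2 hr) (sq_nonneg s),
      mul_nonneg (mul_nonneg (sub_nonneg.2 hr) hs0) hm.le,
      mul_nonneg (mul_nonneg (sub_nonneg.2 hr) (sub_nonneg.2 hr)) hm.le,
      mul_nonneg (mul_nonneg (sub_nonneg.2 hr) (sub_nonneg.2 hr)) hs0,
      mul_nonneg (sub_nonneg.2 hr) hm.le, mul_pos hm hrpos,
      mul_nonneg hs0 hm.le, sq_nonneg (m - q), sq_nonneg (m + q),
      sq_nonneg (m*s), mul_nonneg (mul_nonneg hs0 hm.le) (sq_nonneg q)]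
  have hP : 0 ≤ r ^ 3 - 3 / (2 * m) * (m ^ 2 + q ^ 2) * r ^ 2 + 3 * q ^ 2 * r - q ^ 4 / m := by
    have heq : r ^ 3 - 3 / (2 * m) * (m ^ 2 + q ^ 2) * r ^ 2 + 3 * q ^ 2 * r - q ^ 4 / m
        = (2*m*r^3 - 3*(m^2+q^2)*r^2 + 6*m*q^2*r - 2*q^4) / (2*m) := by
      field_simp; ring
    rw [heq]
    exact div_nonneg key (by linarith)
  exact div_nonneg (mul_nonneg (by positivity) hP) (Real.sqrt_nonneg _)
end
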